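/- Let 𝔤 be a finite-dimensional complex Lie algebra, let f : 𝔤 → ℂ be differentiable and infinitesimally ad-invariant, and let μ, H ∈ 𝔤 satisfy ⁅H,μ⁆ = 0. Then for every t ∈ ℂ the shifted function f_t : 𝔤 → ℂ, f_t(X) := f(X + t•μ), satisfies d(f_t)_X(⁅H,X⁆) = 0 for all X ∈ 𝔤; i.e. all argument-shifts of an ad-invariant function along μ are infinitesimally invariant under ad H. (Infinitesimal form of the forward direction of Proposition 3.31: if μ ∈ 𝔤^A then the Mishchenko–Fomenko algebra F_μ is contained in S(𝔤)^A.) -/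

import Mathlib

theorem stmt5_general {L : Type*} [NormedAddCommGroup L] [NormedSpace ℂ L]
    (br : L →ₗ[ℂ] L →ₗ[ℂ] L)
    (f : L → ℂ) (df : L → (L →L[ℂ] ℂ)) (hdf : ∀ X : L, HasFDerivAt f (df X) X)
    (hfinv : ∀ X Y : L, df X (br Y X) = 0)
    (μ H : L) (hHμ : br H μ = 0) :
    ∀ (t : ℂ) (X : L) (D : L →L[ℂ] ℂ),
      HasFDerivAt (fun Y : L => f (Y + t • μ)) D X → D (br H X) = 0 := by
  intro t X D hD
  have hD_eq : D = df (X + t • μ) :=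
    ((hasFDerivAt_comp_add_right (t • μ)).mp hD).unique (hdf _)
  have hbr_shift : br H (X + t • μ) = br H X := by
    rw [map_add, map_smul, hHμ, smul_zero, add_zero]
  simpa only [hD_eq, hbr_shift] using hfinv (X + t • μ) H

theorem stmt5 {L : Type*} [NormedAddCommGroup L] [NormedSpace ℂ L]
    [FiniteDimensional ℂ L]
    (br : L →ₗ[ℂ] L →ₗ[ℂ] L)
    (halt : ∀ X : L, br X X = 0)
    (hjac : ∀ X Y Z : L, br X (br Y Z) = br (br X Y) Z + br Y (br X Z))
    (f : L → ℂ) (df : L → (L →L[ℂ] ℂ)) (hdf : ∀ X : L, HasFDerivAt f (df X) X)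
    (hfinv : ∀ X Y : L, df X (br Y X) = 0)
    (μ H : L) (hHμ : br H μ = 0) :
    ∀ (t : ℂ) (X : L) (D : L →L[ℂ] ℂ),
      HasFDerivAt (fun Y : L => f (Y + t • μ)) D X → D (br H X) = 0 :=
  stmt5_general br f df hdf hfinv μ H hHμ
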